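/- arXiv:2208.02008 — 4 statements merged into one kernel-verified Lean document; each statement's English description precedes it below -/
import Mathlib

section
/- Consider partitioned quadratic data: finite index types ι_I, ι_B, ρ; a symmetric real matrix H on ι_I ⊕ ι_B with blocks H_II (on ι_I), H_IB, H_BI = H_IBᵀ, H_BB; a constraint matrix G : Matrix ρ (ι_I ⊕ ι_B) ℝ with blocks G_I (columns ι_I) and G_B (columns ι_B); vectors Rx : ι_I ⊕ ι_B → ℝ (with components RxI, RxB) and Ry : ρ → ℝ. Assume the reduced KKT matrix K = fromBlocks H_II G_Iᵀ G_I 0 is invertible, and for each p : ι_B → ℝ let (xI(p), y(p)) be the unique solution of H_II·xI + G_Iᵀ·y = RxI − H_IB·p and G_I·xI = Ry − G_B·p. Let Φ be the quadratic Lagrangian associated with (H, G, Rx, Ry), and define Ψ(p) = Φ((xI(p), p), y(p)), where (xI(p), p) denotes the vector on ι_I ⊕ ι_B with components xI(p) and p. Then there exist a symmetric matrix J₂ on ι_B, a vector J₁ : ι_B → ℝ, and a constant J₀ ∈ ℝ such that Ψ(p) = (1/2)·pᵀ(J₂·p) + J₁ᵀp + J₀ for all p. (This is the paper's equation (23): substituting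 the parametric solution (22) into (21) yields a quadratic function of the boundary variables' increments.) -/
open Matrix

private lemma hflip {n m : Type*} [Fintype n] [Fintype m] (M : Matrix n m ℝ)
    (u : n → ℝ) (v : m → ℝ) : u ⬝ᵥ (M *ᵥ v) = (Mᵀ *ᵥ u) ⬝ᵥ v := by
  rw [Matrix.dotProduct_mulVec, Matrix.mulVec_transpose]

/-- Equation (23) of the paper: substituting the parametric solution (22) into the
quadratic Lagrangian (21) yields a quadratic function
`Ψ(p) = (1/2)·pᵀ(J₂·p) + J₁ᵀp + J₀` of the boundary variables' increments `p`. -/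
theorem boundary_function_is_quadratic
    {ιI ιB ρ : Type*} [Fintype ιI] [Fintype ιB] [Fintype ρ]
    [DecidableEq ιI] [DecidableEq ιB] [DecidableEq ρ]
    (H : Matrix (ιI ⊕ ιB) (ιI ⊕ ιB) ℝ) (hH : H.IsSymm)
    (G : Matrix ρ (ιI ⊕ ιB) ℝ) (Rx : ιI ⊕ ιB → ℝ) (Ry : ρ → ℝ)
    (hK : IsUnit (Matrix.fromBlocks H.toBlocks₁₁ ((G.submatrix id Sum.inl))ᵀ
      (G.submatrix id Sum.inl) (0 : Matrix ρ ρ ℝ)))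
    (xI : (ιB → ℝ) → (ιI → ℝ)) (y : (ιB → ℝ) → (ρ → ℝ))
    (hsol : ∀ p : ιB → ℝ,
      H.toBlocks₁₁ *ᵥ xI p + (G.submatrix id Sum.inl)ᵀ *ᵥ y p =
          (fun i => Rx (Sum.inl i)) - H.toBlocks₁₂ *ᵥ p ∧
      G.submatrix id Sum.inl *ᵥ xI p = Ry - G.submatrix id Sum.inr *ᵥ p)
    (Φ : (ιI ⊕ ιB → ℝ) → (ρ → ℝ) → ℝ)
    (hΦ : ∀ x z, Φ x z = (1 / 2) * (x ⬝ᵥ (H *ᵥ x)) - Rx ⬝ᵥ x + z ⬝ᵥ (G *ᵥ x - Ry))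
    (Ψ : (ιB → ℝ) → ℝ)
    (hΨ : ∀ p, Ψ p = Φ (Sum.elim (xI p) p) (y p)) :
    ∃ (J₂ : Matrix ιB ιB ℝ) (J₁ : ιB → ℝ) (J₀ : ℝ), J₂.IsSymm ∧
      ∀ p : ιB → ℝ, Ψ p = (1 / 2) * (p ⬝ᵥ (J₂ *ᵥ p)) + J₁ ⬝ᵥ p + J₀ := by
  set K : Matrix (ιI ⊕ ρ) (ιI ⊕ ρ) ℝ :=
    Matrix.fromBlocks H.toBlocks₁₁ ((G.submatrix id Sum.inl))ᵀ
      (G.submatrix id Sum.inl) (0 : Matrix ρ ρ ℝ) with hKdef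
  set E : Matrix (ιI ⊕ ρ) (ιI ⊕ ρ) ℝ := K⁻¹ with hE
  have hdet : IsUnit K.det := (Matrix.isUnit_iff_isUnit_det K).mp hK
  have hEK : E * K = 1 := Matrix.nonsing_inv_mul K hdet
  set Cmat : Matrix (ιI ⊕ ρ) ιB ℝ :=
    Matrix.of (Sum.elim (fun i => H.toBlocks₁₂ i) (fun r => G.submatrix id Sum.inr r)) with hC
  set b0 : (ιI ⊕ ρ) → ℝ := Sum.elim (fun i => Rx (Sum.inl i)) Ry with hb0
  have hs : ∀ p : ιB → ℝ,
      Sum.elim (xI p) (y p) = E *ᵥ b0 - (E * Cmat) *ᵥ p := by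
    intro p
    have h1 : K *ᵥ Sum.elim (xI p) (y p) = b0 - Cmat *ᵥ p := by
      rw [hKdef, Matrix.fromBlocks_mulVec]
      funext i
      cases i with
      | inl i =>
        have := congrFun (hsol p).1 i
        simpa [hb0, hC, Matrix.mulVec, dotProduct, sub_eq_add_neg] using this
      | inr r =>
        have := congrFun (hsol p).2 r
        simpa [hb0, hC, Matrix.mulVec, dotProduct, sub_eq_add_neg] using this
    have h2 : E *ᵥ (K *ᵥ Sum.elim (xI p) (y p)) = Sum.elim (xI p) (y p) := by
      rw [Matrix.mulVec_mulVec, hEK, Matrix.one_mulVec]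
    rw [h1] at h2
    rw [← h2, Matrix.mulVec_sub, Matrix.mulVec_mulVec]
  set X : Matrix (ιI ⊕ ιB) ιB ℝ :=
    Matrix.of (Sum.elim (fun i => -((E * Cmat) (Sum.inl i))) (fun b => (1 : Matrix ιB ιB ℝ) b)) with hX
  set x0 : (ιI ⊕ ιB) → ℝ := Sum.elim (fun i => (E *ᵥ b0) (Sum.inl i)) (0 : ιB → ℝ) with hx0
  set Y : Matrix ρ ιB ℝ := -((E * Cmat).submatrix Sum.inr id) with hY
  set y0 : ρ → ℝ := fun r => (E *ᵥ b0) (Sum.inr r) with hy0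
  have hx : ∀ p : ιB → ℝ, Sum.elim (xI p) p = x0 + X *ᵥ p := by
    intro p
    funext i
    cases i with
    | inl i =>
      have := congrFun (hs p) (Sum.inl i)
      simp only [Sum.elim_inl, Pi.sub_apply] at this
      simp [hX, hx0, Matrix.mulVec, dotProduct, this, sub_eq_add_neg, neg_mul,
        Finset.sum_neg_distrib]
    | inr b =>
      simp [hX, hx0, Matrix.mulVec, dotProduct, Matrix.one_apply]
  have hy : ∀ p : ιB → ℝ, y p = y0 + Y *ᵥ p := by
    intro p
    funext r
    have := congrFun (hs p) (Sum.inr r)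
    simp only [Sum.elim_inr, Pi.sub_apply] at this
    simp [hY, hy0, Matrix.mulVec, dotProduct, this, sub_eq_add_neg]
  refine ⟨Xᵀ * H * X + Yᵀ * (G * X) + (Yᵀ * (G * X))ᵀ,
    Xᵀ *ᵥ (H *ᵥ x0) - Xᵀ *ᵥ Rx + Xᵀ *ᵥ (Gᵀ *ᵥ y0) + Yᵀ *ᵥ (G *ᵥ x0 - Ry),
    (1 / 2) * (x0 ⬝ᵥ (H *ᵥ x0)) - Rx ⬝ᵥ x0 + y0 ⬝ᵥ (G *ᵥ x0 - Ry), ?_, ?_⟩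
  · unfold Matrix.IsSymm
    simp only [Matrix.transpose_add, Matrix.transpose_mul, Matrix.transpose_transpose, hH.eq,
      Matrix.mul_assoc]
    abel
  · intro p
    rw [hΨ p, hΦ, hx p, hy p]
    simp only [Matrix.mulVec_add, Matrix.add_mulVec, dotProduct_add, add_dotProduct,
      dotProduct_sub, sub_dotProduct, Matrix.mulVec_mulVec, Matrix.mulVec_sub,
      Matrix.sub_mulVec]
    have e1 : X *ᵥ p ⬝ᵥ H *ᵥ x0 = (Xᵀ * H) *ᵥ x0 ⬝ᵥ p := by
      rw [dotProduct_comm, hflip, Matrix.mulVec_mulVec]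
    have e2 : x0 ⬝ᵥ (H * X) *ᵥ p = (Xᵀ * H) *ᵥ x0 ⬝ᵥ p := by
      rw [hflip, Matrix.transpose_mul, hH.eq]
    have e3 : X *ᵥ p ⬝ᵥ (H * X) *ᵥ p = p ⬝ᵥ (Xᵀ * H * X) *ᵥ p := by
      rw [dotProduct_comm, hflip, Matrix.mulVec_mulVec, dotProduct_comm, ← Matrix.mul_assoc]
    have e4 : Rx ⬝ᵥ X *ᵥ p = Xᵀ *ᵥ Rx ⬝ᵥ p := hflip _ _ _
    have e5 : Y *ᵥ p ⬝ᵥ G *ᵥ x0 = (Yᵀ * G) *ᵥ x0 ⬝ᵥ p := by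
      rw [dotProduct_comm, hflip, Matrix.mulVec_mulVec]
    have e6 : y0 ⬝ᵥ (G * X) *ᵥ p = (Xᵀ * Gᵀ) *ᵥ y0 ⬝ᵥ p := by
      rw [hflip, Matrix.transpose_mul]
    have e7 : Y *ᵥ p ⬝ᵥ (G * X) *ᵥ p = p ⬝ᵥ (Yᵀ * (G * X)) *ᵥ p := by
      rw [dotProduct_comm, hflip, Matrix.mulVec_mulVec, dotProduct_comm]
    have e8 : p ⬝ᵥ (Yᵀ * (G * X))ᵀ *ᵥ p = p ⬝ᵥ (Yᵀ * (G * X)) *ᵥ p := by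
      rw [hflip, Matrix.transpose_transpose, dotProduct_comm]
    have e9 : Y *ᵥ p ⬝ᵥ Ry = Yᵀ *ᵥ Ry ⬝ᵥ p := by
      rw [dotProduct_comm, hflip]
    rw [e1, e2, e3, e4, e5, e6, e7, e8, e9]
    ring
end

section
/- Let κ be a finite index type, and for each k ∈ κ let ι_k and ρ_k be finite index types, E_k : Matrix ι_k ι̂ ℝ an arbitrary matrix (ι̂ a finite index type), H_k a symmetric ι_k×ι_k real matrix, G_k : Matrix ρ_k ι_k ℝ, and R_kx : ι_k → ℝ, R_ky : ρ_k → ℝ; let Φ_k be the quadratic Lagrangian associated with (H_k, G_k, R_kx, R_ky). Define Ĥ = Σ_k E_kᵀ·H_k·E_k, R̂x = Σ_k E_kᵀ·R_kx, let the global constraint index be the sigma type ρ̂ = Σ k, ρ_k, let Ĝ : Matrix ρ̂ ι̂ ℝ have row ⟨k, r⟩ equal to row r of G_k·E_k, and let R̂y : ρ̂ → ℝ have component ⟨k, r⟩ equal to R_ky r. Then for every x̂ : ι̂ → ℝ and every ŷ : ρ̂ → ℝ, writing y_k : ρ_k → ℝ for the k-th block of ŷ, one has (1/2)·x̂ᵀ(Ĥ·x̂)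 − R̂xᵀx̂ + ŷᵀ(Ĝ·x̂ − R̂y) = Σ_k Φ_k(E_k·x̂, y_k). (This is the superposition identity by which the paper rewrites the centralized quadratic problem (A-3) as the sum of local problems in (A-5).) -/
open Matrix


lemma mySum_mulVec {κ n m : Type*} [Fintype κ] [Fintype m] (M : κ → Matrix n m ℝ) (v : m → ℝ) :
    (∑ k, M k) *ᵥ v = ∑ k, M k *ᵥ v := by
  ext i
  simp [mulVec, dotProduct, Matrix.sum_apply, Finset.sum_apply, Finset.sum_mul]
  exact Finset.sum_comm .. 

lemma myDot_sum {κ n : Type*} [Fintype κ] [Fintype n] (v : n → ℝ) (w : κ → n → ℝ) :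
    v ⬝ᵥ (∑ k, w k) = ∑ k, v ⬝ᵥ w k := by
  simp [dotProduct, Finset.sum_apply, Finset.mul_sum]
  exact Finset.sum_comm ..

lemma mySum_dot {κ n : Type*} [Fintype κ] [Fintype n] (w : κ → n → ℝ) (v : n → ℝ) :
    (∑ k, w k) ⬝ᵥ v = ∑ k, w k ⬝ᵥ v := by
  simp [dotProduct, Finset.sum_apply, Finset.sum_mul]
  exact Finset.sum_comm ..


/-- The superposition identity (A-3)→(A-5) of the paper: with
`Ĥ = Σ_k E_kᵀ·H_k·E_k`, `R̂x = Σ_k E_kᵀ·R_kx`, global constraint index `Σ k, ρ k`,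
`Ĝ` assembled from the rows of `G_k·E_k`, and `R̂y` assembled from the `R_ky`, the
centralized quadratic Lagrangian splits as the sum of the local quadratic Lagrangians
`Φ_k(E_k·x̂, y_k)`. -/
theorem centralized_lagrangian_superposition
    {κ ιhat : Type*} [Fintype κ] [Fintype ιhat]
    {ι ρ : κ → Type*} [∀ k, Fintype (ι k)] [∀ k, Fintype (ρ k)]
    (E : ∀ k, Matrix (ι k) ιhat ℝ)
    (H : ∀ k, Matrix (ι k) (ι k) ℝ) (hH : ∀ k, (H k).IsSymm)
    (G : ∀ k, Matrix (ρ k) (ι k) ℝ)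
    (Rx : ∀ k, ι k → ℝ) (Ry : ∀ k, ρ k → ℝ)
    (Φ : ∀ k, (ι k → ℝ) → (ρ k → ℝ) → ℝ)
    (hΦ : ∀ k x y, Φ k x y =
      (1 / 2) * (x ⬝ᵥ (H k *ᵥ x)) - Rx k ⬝ᵥ x + y ⬝ᵥ (G k *ᵥ x - Ry k))
    (Hhat : Matrix ιhat ιhat ℝ) (hHhat : Hhat = ∑ k, (E k)ᵀ * H k * E k)
    (Rxhat : ιhat → ℝ) (hRxhat : Rxhat = ∑ k, (E k)ᵀ *ᵥ Rx k)
    (Ghat : Matrix (Σ k, ρ k) ιhat ℝ)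
    (hGhat : ∀ (k : κ) (r : ρ k) (j : ιhat), Ghat ⟨k, r⟩ j = (G k * E k) r j)
    (Ryhat : (Σ k, ρ k) → ℝ) (hRyhat : ∀ (k : κ) (r : ρ k), Ryhat ⟨k, r⟩ = Ry k r)
    (xhat : ιhat → ℝ) (yhat : (Σ k, ρ k) → ℝ) :
    (1 / 2) * (xhat ⬝ᵥ (Hhat *ᵥ xhat)) - Rxhat ⬝ᵥ xhat +
        yhat ⬝ᵥ (Ghat *ᵥ xhat - Ryhat) =
      ∑ k, Φ k (E k *ᵥ xhat) (fun r => yhat ⟨k, r⟩) := by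
  subst hHhat hRxhat
  simp only [hΦ]
  have h1 : xhat ⬝ᵥ ((∑ k, (E k)ᵀ * H k * E k) *ᵥ xhat)
      = ∑ k, (E k *ᵥ xhat) ⬝ᵥ (H k *ᵥ (E k *ᵥ xhat)) := by
    rw [mySum_mulVec, myDot_sum]
    refine Finset.sum_congr rfl fun k _ => ?_
    rw [← mulVec_mulVec, ← mulVec_mulVec, dotProduct_mulVec, vecMul_transpose]
  have h2 : (∑ k, (E k)ᵀ *ᵥ Rx k) ⬝ᵥ xhat = ∑ k, Rx k ⬝ᵥ (E k *ᵥ xhat) := by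
    rw [mySum_dot]
    refine Finset.sum_congr rfl fun k _ => ?_
    rw [mulVec_transpose, ← dotProduct_mulVec]
  have h3 : yhat ⬝ᵥ (Ghat *ᵥ xhat - Ryhat)
      = ∑ k, (fun r => yhat ⟨k, r⟩) ⬝ᵥ (G k *ᵥ (E k *ᵥ xhat) - Ry k) := by
    rw [dotProduct, ← Finset.univ_sigma_univ, Finset.sum_sigma]
    refine Finset.sum_congr rfl fun k _ => Finset.sum_congr rfl fun r _ => ?_
    congr 1
    simp [mulVec, hGhat, hRyhat, Matrix.mul_apply, dotProduct, Finset.sum_mul, mul_assoc]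
  rw [h1, h2, h3, Finset.mul_sum, ← Finset.sum_sub_distrib, ← Finset.sum_add_distrib]
end

section
/- Decentralized solutions solve the centralized KKT system (appendix, forward direction). Setup: finite index types ι_T (transmission independent variables), ι_B (boundary variables), ρ_T (transmission constraints); a finite index type κ of distribution systems, and for each k ∈ κ finite index types ι_k, ρ_k. Transmission data: a symmetric real matrix H_T on ι_T ⊕ ι_B, G_T : Matrix ρ_T (ι_T ⊕ ι_B) ℝ, R_Tx : ι_T ⊕ ι_B → ℝ, R_Ty : ρ_T → ℝ, with quadratic Lagrangian Φ_T. Distribution data for each k: a symmetric real matrix H_k on ι_k ⊕ ι_B with blocks H_k^II, H_k^IB, H_k^BI = (H_k^IB)ᵀ, H_k^BB; G_k : Matrix ρ_k (ι_k ⊕ ι_B) ℝ with blocks G_k^I, G_k^B; R_kx : ι_k ⊕ ι_B → ℝ with components R_kx^I, R_kx^B; R_ky : ρ_k → ℝ; quadratic Lagrangian Φ_k; assume the reduced KKT matrix K_k = fromBlocks H_k^II (G_k^I)ᵀ G_k^I 0 is invertible, let (x_k^I(p), y_k(p)) denote the unique solution of H_k^II·x + (G_k^I)ᵀ·y = R_kx^I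 − H_k^IB·p and G_k^I·x = R_ky − G_k^B·p for each p : ι_B → ℝ, and let Φ̃_k(p) = Φ_k((x_k^I(p), p), y_k(p)). Global data: variable index ι̂ = ι_T ⊕ ι_B ⊕ (Σ k, ι_k), constraint index ρ̂ = ρ_T ⊕ (Σ k, ρ_k), coordinate-selection matrices E_T : Matrix (ι_T ⊕ ι_B) ι̂ ℝ and E_k : Matrix (ι_k ⊕ ι_B) ι̂ ℝ picking out the corresponding coordinates of ι̂, Ĥ = E_Tᵀ·H_T·E_T + Σ_k E_kᵀ·H_k·E_k, R̂x = E_Tᵀ·R_Tx + Σ_k E_kᵀ·R_kx, Ĝ the block matrix whose ρ_T-rows are G_T·E_T and whose ρ_k-rows are G_k·E_k, and R̂y assembled blockwise from R_Ty and the R_ky. Theorem: if (x_T, p, y_T) is a stationary point (vanishing Fréchet derivative) of the function (a, q, y) ↦ Φ_T((a, q), y) + Σ_k Φ̃_k(q), then the assembled vectors x̂ : ι̂ → ℝ (with ι_T-component x_T, ι_B-component p, and ι_k-component x_k^I(p)) and ŷ : ρ̂ → ℝ (with ρ_T-component y_T and ρ_k-component y_k(p)) satisfy the centralized system Ĥ·x̂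 + Ĝᵀ·ŷ = R̂x and Ĝ·x̂ = R̂y. -/
open Matrix

/-- A coordinate-selection matrix: for an embedding `e : ι' → ιhat`, the 0–1 matrix
whose row `i` has a single `1` in column `e i`. -/
noncomputable def selectionMatrix {ι' ιhat : Type*} [DecidableEq ιhat]
    (e : ι' → ιhat) : Matrix ι' ιhat ℝ :=
  Matrix.of fun i j => if j = e i then 1 else 0

section AuxKKT

noncomputable def dotCLM {n : Type*} [Fintype n] (g : n → ℝ) : (n → ℝ) →L[ℝ] ℝ :=
  LinearMap.toContinuousLinearMap
    { toFun := fun v => g ⬝ᵥ v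
      map_add' := fun a b => dotProduct_add g a b
      map_smul' := fun c a => by simp }

@[simp] lemma dotCLM_apply {n : Type*} [Fintype n] (g v : n → ℝ) : dotCLM g v = g ⬝ᵥ v := rfl

noncomputable def mulVecCLM {a b : Type*} [Fintype a] [Fintype b] (M : Matrix a b ℝ) :
    (b → ℝ) →L[ℝ] (a → ℝ) :=
  LinearMap.toContinuousLinearMap M.mulVecLin

@[simp] lemma mulVecCLM_apply {a b : Type*} [Fintype a] [Fintype b] (M : Matrix a b ℝ)
    (v : b → ℝ) : mulVecCLM M v = M *ᵥ v := rfl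

noncomputable def elimCLM {a b : Type*} [Fintype a] [Fintype b] :
    ((a → ℝ) × (b → ℝ)) →L[ℝ] (a ⊕ b → ℝ) :=
  LinearMap.toContinuousLinearMap
    { toFun := fun z => Sum.elim z.1 z.2
      map_add' := fun u v => by funext r; cases r <;> rfl
      map_smul' := fun c u => by funext r; cases r <;> rfl }

@[simp] lemma elimCLM_apply {a b : Type*} [Fintype a] [Fintype b]
    (z : (a → ℝ) × (b → ℝ)) : elimCLM z = Sum.elim z.1 z.2 := rfl

noncomputable def resCLM {a b : Type*} (f : a → b) : (b → ℝ) →L[ℝ] (a → ℝ) :=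
  ContinuousLinearMap.pi (fun i => ContinuousLinearMap.proj (f i))

@[simp] lemma resCLM_apply {a b : Type*} (f : a → b) (v : b → ℝ) :
    resCLM f v = fun i => v (f i) := rfl

lemma dotProduct_elim {a b : Type*} [Fintype a] [Fintype b]
    (g : a ⊕ b → ℝ) (u : a → ℝ) (v : b → ℝ) :
    g ⬝ᵥ Sum.elim u v = (fun i => g (Sum.inl i)) ⬝ᵥ u + (fun j => g (Sum.inr j)) ⬝ᵥ v := by
  simp [dotProduct, Fintype.sum_sum_type]

lemma sum_mulVec' {κ a b : Type*} [Fintype κ] [Fintype b]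
    (M : κ → Matrix a b ℝ) (v : b → ℝ) : (∑ k, M k) *ᵥ v = ∑ k, M k *ᵥ v := by
  funext j
  simp only [Matrix.mulVec, dotProduct, Matrix.sum_apply, Finset.sum_apply, Finset.sum_mul]
  exact Finset.sum_comm

lemma sel_mulVec {ι' ιh : Type*} [Fintype ιh] [DecidableEq ιh]
    (e : ι' → ιh) (x : ιh → ℝ) :
    selectionMatrix e *ᵥ x = fun i => x (e i) := by
  funext i
  simp [selectionMatrix, Matrix.mulVec, dotProduct, ite_mul, one_mul, zero_mul,
    Finset.sum_ite_eq']

lemma selT_apply {ι' ιh : Type*} [Fintype ι'] [DecidableEq ιh]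
    (e : ι' → ιh) (v : ι' → ℝ) (j : ιh) :
    ((selectionMatrix e)ᵀ *ᵥ v) j = ∑ i, if j = e i then v i else 0 := by
  simp [selectionMatrix, Matrix.mulVec, dotProduct, Matrix.transpose_apply, ite_mul,
    one_mul, zero_mul, mul_comm]

lemma transpose_mulVec_apply {a b : Type*} [Fintype a] (M : Matrix a b ℝ) (v : a → ℝ) (j : b) :
    (Mᵀ *ᵥ v) j = ∑ r, M r j * v r := by
  simp [Matrix.mulVec, dotProduct, Matrix.transpose_apply, mul_comm]

theorem quad_hasFDerivAt {n m : Type*} [Fintype n] [Fintype m]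
    (H : Matrix n n ℝ) (hH : H.IsSymm) (G : Matrix m n ℝ) (Rx : n → ℝ) (Ry : m → ℝ)
    (x : n → ℝ) (y : m → ℝ) :
    HasFDerivAt (fun z : (n → ℝ) × (m → ℝ) =>
      (1 / 2 : ℝ) * (z.1 ⬝ᵥ (H *ᵥ z.1)) - Rx ⬝ᵥ z.1 + z.2 ⬝ᵥ (G *ᵥ z.1 - Ry))
      ((dotCLM (H *ᵥ x - Rx + Gᵀ *ᵥ y)).comp (ContinuousLinearMap.fst ℝ (n → ℝ) (m → ℝ))
        + (dotCLM (G *ᵥ x - Ry)).comp (ContinuousLinearMap.snd ℝ (n → ℝ) (m → ℝ))) (x, y) := by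
  have hc : ∀ i : n, HasFDerivAt (fun z : (n → ℝ) × (m → ℝ) => z.1 i)
      ((ContinuousLinearMap.proj i).comp (ContinuousLinearMap.fst ℝ (n → ℝ) (m → ℝ))) (x, y) :=
    fun i => ((ContinuousLinearMap.proj i).comp
      (ContinuousLinearMap.fst ℝ (n → ℝ) (m → ℝ))).hasFDerivAt
  have hrow : ∀ i : n, HasFDerivAt (fun z : (n → ℝ) × (m → ℝ) => (H *ᵥ z.1) i)
      ((dotCLM (H i)).comp (ContinuousLinearMap.fst ℝ (n → ℝ) (m → ℝ))) (x, y) :=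
    fun i => ((dotCLM (H i)).comp (ContinuousLinearMap.fst ℝ (n → ℝ) (m → ℝ))).hasFDerivAt
  have hc2 : ∀ r : m, HasFDerivAt (fun z : (n → ℝ) × (m → ℝ) => z.2 r)
      ((ContinuousLinearMap.proj r).comp (ContinuousLinearMap.snd ℝ (n → ℝ) (m → ℝ))) (x, y) :=
    fun r => ((ContinuousLinearMap.proj r).comp
      (ContinuousLinearMap.snd ℝ (n → ℝ) (m → ℝ))).hasFDerivAt
  have hrow2 : ∀ r : m, HasFDerivAt (fun z : (n → ℝ) × (m → ℝ) => (G *ᵥ z.1) r - Ry r)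
      ((dotCLM (G r)).comp (ContinuousLinearMap.fst ℝ (n → ℝ) (m → ℝ))) (x, y) :=
    fun r => (((dotCLM (G r)).comp
      (ContinuousLinearMap.fst ℝ (n → ℝ) (m → ℝ))).hasFDerivAt).sub_const (Ry r)
  have hT1 : HasFDerivAt (fun z : (n → ℝ) × (m → ℝ) => z.1 ⬝ᵥ (H *ᵥ z.1))
      (∑ i, (x i • ((dotCLM (H i)).comp (ContinuousLinearMap.fst ℝ (n → ℝ) (m → ℝ)))
        + (H *ᵥ x) i • ((ContinuousLinearMap.proj i).comp
            (ContinuousLinearMap.fst ℝ (n → ℝ) (m → ℝ))))) (x, y) :=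
    HasFDerivAt.fun_sum fun i _ => (hc i).fun_mul (hrow i)
  have hT2 : HasFDerivAt (fun z : (n → ℝ) × (m → ℝ) => Rx ⬝ᵥ z.1)
      ((dotCLM Rx).comp (ContinuousLinearMap.fst ℝ (n → ℝ) (m → ℝ))) (x, y) :=
    ((dotCLM Rx).comp (ContinuousLinearMap.fst ℝ (n → ℝ) (m → ℝ))).hasFDerivAt
  have hT3 : HasFDerivAt (fun z : (n → ℝ) × (m → ℝ) => z.2 ⬝ᵥ (G *ᵥ z.1 - Ry))
      (∑ r, (y r • ((dotCLM (G r)).comp (ContinuousLinearMap.fst ℝ (n → ℝ) (m → ℝ)))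
        + ((G *ᵥ x) r - Ry r) • ((ContinuousLinearMap.proj r).comp
            (ContinuousLinearMap.snd ℝ (n → ℝ) (m → ℝ))))) (x, y) :=
    HasFDerivAt.fun_sum fun r _ => (hc2 r).fun_mul (hrow2 r)
  have hf := ((hT1.const_mul ((1:ℝ)/2)).sub hT2).add hT3
  have heq : ((dotCLM (H *ᵥ x - Rx + Gᵀ *ᵥ y)).comp (ContinuousLinearMap.fst ℝ (n → ℝ) (m → ℝ))
        + (dotCLM (G *ᵥ x - Ry)).comp (ContinuousLinearMap.snd ℝ (n → ℝ) (m → ℝ)))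
      = (((1:ℝ)/2) • ∑ i, (x i • ((dotCLM (H i)).comp (ContinuousLinearMap.fst ℝ (n → ℝ) (m → ℝ)))
        + (H *ᵥ x) i • ((ContinuousLinearMap.proj i).comp
            (ContinuousLinearMap.fst ℝ (n → ℝ) (m → ℝ))))
        - (dotCLM Rx).comp (ContinuousLinearMap.fst ℝ (n → ℝ) (m → ℝ))
        + ∑ r, (y r • ((dotCLM (G r)).comp (ContinuousLinearMap.fst ℝ (n → ℝ) (m → ℝ)))
        + ((G *ᵥ x) r - Ry r) • ((ContinuousLinearMap.proj r).comp
            (ContinuousLinearMap.snd ℝ (n → ℝ) (m → ℝ))))) := by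
    refine ContinuousLinearMap.ext fun d => ?_
    simp only [ContinuousLinearMap.add_apply, ContinuousLinearMap.comp_apply,
      ContinuousLinearMap.coe_fst', ContinuousLinearMap.coe_snd', ContinuousLinearMap.sub_apply,
      ContinuousLinearMap.smul_apply, ContinuousLinearMap.sum_apply, ContinuousLinearMap.proj_apply,
      dotCLM_apply, smul_eq_mul]
    have e1 : ∑ i, x i * (H i ⬝ᵥ d.1) = (H *ᵥ x) ⬝ᵥ d.1 := by
      have : ∑ i, x i * (H i ⬝ᵥ d.1) = x ⬝ᵥ (H *ᵥ d.1) := rfl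
      rw [this, dotProduct_mulVec, ← mulVec_transpose, hH]
    have e2 : ∑ r, y r * (G r ⬝ᵥ d.1) = (Gᵀ *ᵥ y) ⬝ᵥ d.1 := by
      have : ∑ r, y r * (G r ⬝ᵥ d.1) = y ⬝ᵥ (G *ᵥ d.1) := rfl
      rw [this, dotProduct_mulVec, ← mulVec_transpose]
    have e3 : ∑ i, (H *ᵥ x) i * d.1 i = (H *ᵥ x) ⬝ᵥ d.1 := rfl
    have e4 : ∑ r, ((G *ᵥ x) r - Ry r) * d.2 r = (G *ᵥ x - Ry) ⬝ᵥ d.2 := rfl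
    rw [Finset.sum_add_distrib, Finset.sum_add_distrib, e1, e2, e3, e4]
    simp only [add_dotProduct, sub_dotProduct]
    ring
  rw [heq]
  exact hf

lemma dist_affine {n r b : Type*} [Fintype n] [Fintype r] [Fintype b]
    [DecidableEq n] [DecidableEq r]
    (A : Matrix n n ℝ) (C : Matrix r n ℝ) (Bm : Matrix n b ℝ) (Dm : Matrix r b ℝ)
    (c1 : n → ℝ) (c2 : r → ℝ)
    (hK : IsUnit (Matrix.fromBlocks A Cᵀ C (0 : Matrix r r ℝ)))
    (xf : (b → ℝ) → (n → ℝ)) (yf : (b → ℝ) → (r → ℝ))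
    (hs : ∀ q, A *ᵥ xf q + Cᵀ *ᵥ yf q = c1 - Bm *ᵥ q ∧ C *ᵥ xf q = c2 - Dm *ᵥ q)
    (q : b → ℝ) :
    Sum.elim (xf q) (yf q) =
      (Matrix.fromBlocks A Cᵀ C (0 : Matrix r r ℝ))⁻¹ *ᵥ Sum.elim c1 c2
      - ((Matrix.fromBlocks A Cᵀ C (0 : Matrix r r ℝ))⁻¹ *
          Matrix.of (fun (s : n ⊕ r) (j : b) =>
            Sum.elim (fun i => Bm i j) (fun i => Dm i j) s)) *ᵥ q := by
  have hdet : IsUnit (Matrix.fromBlocks A Cᵀ C (0 : Matrix r r ℝ)).det :=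
    (Matrix.isUnit_iff_isUnit_det _).mp hK
  have hM1 : ∀ i, ((Matrix.of (fun (s : n ⊕ r) (j : b) =>
      Sum.elim (fun i => Bm i j) (fun i => Dm i j) s)) *ᵥ q) (Sum.inl i) = (Bm *ᵥ q) i := by
    intro i; simp [Matrix.mulVec, dotProduct]
  have hM2 : ∀ i, ((Matrix.of (fun (s : n ⊕ r) (j : b) =>
      Sum.elim (fun i => Bm i j) (fun i => Dm i j) s)) *ᵥ q) (Sum.inr i) = (Dm *ᵥ q) i := by
    intro i; simp [Matrix.mulVec, dotProduct]
  have hKz : (Matrix.fromBlocks A Cᵀ C (0 : Matrix r r ℝ)) *ᵥ Sum.elim (xf q) (yf q)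
      = Sum.elim c1 c2 - (Matrix.of (fun (s : n ⊕ r) (j : b) =>
          Sum.elim (fun i => Bm i j) (fun i => Dm i j) s)) *ᵥ q := by
    rw [Matrix.fromBlocks_mulVec]
    funext s
    rcases s with i | i
    · have h1 := congrFun (hs q).1 i
      simpa [hM1 i] using h1
    · have h2 := congrFun (hs q).2 i
      simpa [hM2 i] using h2
  calc Sum.elim (xf q) (yf q)
      = ((Matrix.fromBlocks A Cᵀ C (0 : Matrix r r ℝ))⁻¹
          * Matrix.fromBlocks A Cᵀ C (0 : Matrix r r ℝ)) *ᵥ Sum.elim (xf q) (yf q) := by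
        rw [Matrix.nonsing_inv_mul _ hdet, Matrix.one_mulVec]
    _ = (Matrix.fromBlocks A Cᵀ C (0 : Matrix r r ℝ))⁻¹ *ᵥ
          ((Matrix.fromBlocks A Cᵀ C (0 : Matrix r r ℝ)) *ᵥ Sum.elim (xf q) (yf q)) := by
        rw [Matrix.mulVec_mulVec]
    _ = (Matrix.fromBlocks A Cᵀ C (0 : Matrix r r ℝ))⁻¹ *ᵥ Sum.elim c1 c2
          - ((Matrix.fromBlocks A Cᵀ C (0 : Matrix r r ℝ))⁻¹
            * Matrix.of (fun (s : n ⊕ r) (j : b) =>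
                Sum.elim (fun i => Bm i j) (fun i => Dm i j) s)) *ᵥ q := by
        rw [hKz, Matrix.mulVec_sub, Matrix.mulVec_mulVec]

lemma dist_grad {n r b : Type*} [Fintype n] [Fintype r] [Fintype b]
    (Hk : Matrix (n ⊕ b) (n ⊕ b) ℝ) (Gk : Matrix r (n ⊕ b) ℝ)
    (Rxk : n ⊕ b → ℝ) (Ryk : r → ℝ) (xv : n → ℝ) (yv : r → ℝ) (q : b → ℝ)
    (hs1 : Hk.toBlocks₁₁ *ᵥ xv + (Gk.submatrix id Sum.inl)ᵀ *ᵥ yv =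
      (fun i => Rxk (Sum.inl i)) - Hk.toBlocks₁₂ *ᵥ q)
    (hs2 : Gk.submatrix id Sum.inl *ᵥ xv = Ryk - Gk.submatrix id Sum.inr *ᵥ q) :
    (∀ i, (Hk *ᵥ Sum.elim xv q - Rxk + Gkᵀ *ᵥ yv) (Sum.inl i) = 0) ∧
      Gk *ᵥ Sum.elim xv q - Ryk = 0 := by
  constructor
  · intro i
    have hH1 : (Hk *ᵥ Sum.elim xv q) (Sum.inl i)
        = (Hk.toBlocks₁₁ *ᵥ xv) i + (Hk.toBlocks₁₂ *ᵥ q) i := by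
      conv_lhs => rw [← Matrix.fromBlocks_toBlocks Hk, Matrix.fromBlocks_mulVec]
      simp
    have hG1 : (Gkᵀ *ᵥ yv) (Sum.inl i) = ((Gk.submatrix id Sum.inl)ᵀ *ᵥ yv) i := by
      simp [Matrix.mulVec, dotProduct, Matrix.transpose_apply, Matrix.submatrix_apply]
    have h1 := congrFun hs1 i
    simp only [Pi.add_apply, Pi.sub_apply] at h1 ⊢
    rw [hH1, hG1]
    linarith [h1]
  · funext s
    have hG : (Gk *ᵥ Sum.elim xv q) s
        = (Gk.submatrix id Sum.inl *ᵥ xv) s + (Gk.submatrix id Sum.inr *ᵥ q) s := by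
      simp [Matrix.mulVec, dotProduct, Fintype.sum_sum_type, Matrix.submatrix_apply]
    have h2 := congrFun hs2 s
    simp only [Pi.sub_apply, Pi.zero_apply] at h2 ⊢
    rw [hG]
    linarith [h2]

lemma phi_hasFDerivAt {n r b : Type*} [Fintype n] [Fintype r] [Fintype b]
    (W : Matrix (n ⊕ r) b ℝ) (z0 : n ⊕ r → ℝ)
    (xf : (b → ℝ) → (n → ℝ)) (yf : (b → ℝ) → (r → ℝ))
    (hx : ∀ q, xf q = fun i => (z0 - W *ᵥ q) (Sum.inl i))
    (hy : ∀ q, yf q = fun j => (z0 - W *ᵥ q) (Sum.inr j)) (q0 : b → ℝ) :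
    HasFDerivAt (fun q => (Sum.elim (xf q) q, yf q))
      ((elimCLM.comp (((resCLM Sum.inl).comp (-(mulVecCLM W))).prod
          (ContinuousLinearMap.id ℝ (b → ℝ)))).prod
        ((resCLM Sum.inr).comp (-(mulVecCLM W)))) q0 := by
  have hfun : (fun q => (Sum.elim (xf q) q, yf q)) =
      fun q : b → ℝ =>
        ((Sum.elim (fun i => z0 (Sum.inl i)) 0, fun j => z0 (Sum.inr j)) :
          (n ⊕ b → ℝ) × (r → ℝ))
        + ((elimCLM.comp (((resCLM Sum.inl).comp (-(mulVecCLM W))).prod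
            (ContinuousLinearMap.id ℝ (b → ℝ)))).prod
          ((resCLM Sum.inr).comp (-(mulVecCLM W)))) q := by
    funext q
    refine Prod.ext ?_ ?_
    · funext s
      rcases s with i | j <;>
        simp [hx q, Prod.fst_add, Pi.add_apply, ContinuousLinearMap.prod_apply,
          ContinuousLinearMap.comp_apply, ContinuousLinearMap.neg_apply,
          ContinuousLinearMap.id_apply] <;> ring
    · funext j
      simp [hy q, Prod.snd_add, Pi.add_apply, ContinuousLinearMap.prod_apply,
        ContinuousLinearMap.comp_apply, ContinuousLinearMap.neg_apply]
      ring
  rw [hfun]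
  have h := (hasFDerivAt_const
      ((Sum.elim (fun i => z0 (Sum.inl i)) 0, fun j => z0 (Sum.inr j)) :
        (n ⊕ b → ℝ) × (r → ℝ)) q0).fun_add
    (ContinuousLinearMap.hasFDerivAt
      ((elimCLM.comp (((resCLM Sum.inl).comp (-(mulVecCLM W))).prod
          (ContinuousLinearMap.id ℝ (b → ℝ)))).prod
        ((resCLM Sum.inr).comp (-(mulVecCLM W)))))
  simpa using h

end AuxKKT

/-- Appendix, forward direction: a stationary point of the decentralized two-layer
problem `(a, q, y) ↦ Φ_T((a, q), y) + Σ_k Φ̃_k(q)` assembles (together with the unique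
parametric distribution solutions `x_k^I(p), y_k(p)`) into a solution of the
centralized KKT system `Ĥ·x̂ + Ĝᵀ·ŷ = R̂x`, `Ĝ·x̂ = R̂y`. -/
theorem decentralized_solves_centralized_kkt
    {ιT ιB ρT κ : Type*} [Fintype ιT] [Fintype ιB] [Fintype ρT] [Fintype κ]
    [DecidableEq ιT] [DecidableEq ιB] [DecidableEq ρT] [DecidableEq κ]
    {ι ρ : κ → Type*} [∀ k, Fintype (ι k)] [∀ k, Fintype (ρ k)]
    [∀ k, DecidableEq (ι k)] [∀ k, DecidableEq (ρ k)]
    -- transmission data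
    (HT : Matrix (ιT ⊕ ιB) (ιT ⊕ ιB) ℝ) (hHT : HT.IsSymm)
    (GT : Matrix ρT (ιT ⊕ ιB) ℝ) (RTx : ιT ⊕ ιB → ℝ) (RTy : ρT → ℝ)
    (ΦT : (ιT ⊕ ιB → ℝ) → (ρT → ℝ) → ℝ)
    (hΦT : ∀ x y, ΦT x y =
      (1 / 2) * (x ⬝ᵥ (HT *ᵥ x)) - RTx ⬝ᵥ x + y ⬝ᵥ (GT *ᵥ x - RTy))
    -- distribution data
    (H : ∀ k, Matrix (ι k ⊕ ιB) (ι k ⊕ ιB) ℝ) (hH : ∀ k, (H k).IsSymm)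
    (G : ∀ k, Matrix (ρ k) (ι k ⊕ ιB) ℝ)
    (Rx : ∀ k, ι k ⊕ ιB → ℝ) (Ry : ∀ k, ρ k → ℝ)
    (Φ : ∀ k, (ι k ⊕ ιB → ℝ) → (ρ k → ℝ) → ℝ)
    (hΦ : ∀ k x y, Φ k x y =
      (1 / 2) * (x ⬝ᵥ (H k *ᵥ x)) - Rx k ⬝ᵥ x + y ⬝ᵥ (G k *ᵥ x - Ry k))
    (hK : ∀ k, IsUnit (Matrix.fromBlocks (H k).toBlocks₁₁
      ((G k).submatrix id Sum.inl)ᵀ ((G k).submatrix id Sum.inl)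
      (0 : Matrix (ρ k) (ρ k) ℝ)))
    -- the (unique) parametric solutions of the distribution KKT systems
    (xI : ∀ k, (ιB → ℝ) → (ι k → ℝ)) (yD : ∀ k, (ιB → ℝ) → (ρ k → ℝ))
    (hsol : ∀ k (p : ιB → ℝ),
      (H k).toBlocks₁₁ *ᵥ xI k p + ((G k).submatrix id Sum.inl)ᵀ *ᵥ yD k p =
          (fun i => Rx k (Sum.inl i)) - (H k).toBlocks₁₂ *ᵥ p ∧
        (G k).submatrix id Sum.inl *ᵥ xI k p =
          Ry k - (G k).submatrix id Sum.inr *ᵥ p)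
    -- the boundary value functions Φ̃_k
    (Φt : ∀ _ : κ, (ιB → ℝ) → ℝ)
    (hΦt : ∀ k p, Φt k p = Φ k (Sum.elim (xI k p) p) (yD k p))
    -- a stationary point of the decentralized two-layer objective
    (xT : ιT → ℝ) (p : ιB → ℝ) (yT : ρT → ℝ)
    (hstat : fderiv ℝ (fun z : (ιT → ℝ) × (ιB → ℝ) × (ρT → ℝ) =>
      ΦT (Sum.elim z.1 z.2.1) z.2.2 + ∑ k, Φt k z.2.1) (xT, p, yT) = 0) :
    -- assembled global data
    let ET : Matrix (ιT ⊕ ιB) (ιT ⊕ ιB ⊕ (Σ k, ι k)) ℝ :=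
      selectionMatrix (Sum.elim (fun i => Sum.inl i) fun b => Sum.inr (Sum.inl b))
    let E : ∀ k, Matrix (ι k ⊕ ιB) (ιT ⊕ ιB ⊕ (Σ k, ι k)) ℝ := fun k =>
      selectionMatrix (Sum.elim (fun i => Sum.inr (Sum.inr ⟨k, i⟩))
        fun b => Sum.inr (Sum.inl b))
    let Hhat : Matrix (ιT ⊕ ιB ⊕ (Σ k, ι k)) (ιT ⊕ ιB ⊕ (Σ k, ι k)) ℝ :=
      ETᵀ * HT * ET + ∑ k, (E k)ᵀ * H k * E k
    let Rxhat : ιT ⊕ ιB ⊕ (Σ k, ι k) → ℝ :=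
      ETᵀ *ᵥ RTx + ∑ k, (E k)ᵀ *ᵥ Rx k
    let Ghat : Matrix (ρT ⊕ (Σ k, ρ k)) (ιT ⊕ ιB ⊕ (Σ k, ι k)) ℝ :=
      Matrix.of fun r j =>
        Sum.elim (fun rT => (GT * ET) rT j) (fun s => (G s.1 * E s.1) s.2 j) r
    let Ryhat : ρT ⊕ (Σ k, ρ k) → ℝ := Sum.elim RTy fun s => Ry s.1 s.2
    -- assembled primal and dual vectors
    let xhat : ιT ⊕ ιB ⊕ (Σ k, ι k) → ℝ :=
      Sum.elim xT (Sum.elim p fun s => xI s.1 p s.2)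
    let yhat : ρT ⊕ (Σ k, ρ k) → ℝ := Sum.elim yT fun s => yD s.1 p s.2
    Hhat *ᵥ xhat + Ghatᵀ *ᵥ yhat = Rxhat ∧ Ghat *ᵥ xhat = Ryhat := by
  classical
  intro ET E Hhat Rxhat Ghat Ryhat xhat yhat
  have hETdef : ET = selectionMatrix
      (Sum.elim (fun i => (Sum.inl i : ιT ⊕ ιB ⊕ (Σ k, ι k)))
        fun b => Sum.inr (Sum.inl b)) := rfl
  have hEdef : ∀ k, E k = selectionMatrix
      (Sum.elim (fun i => (Sum.inr (Sum.inr ⟨k, i⟩) : ιT ⊕ ιB ⊕ (Σ k, ι k)))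
        fun b => Sum.inr (Sum.inl b)) := fun k => rfl
  have hHhatdef : Hhat = ETᵀ * HT * ET + ∑ k, (E k)ᵀ * H k * E k := rfl
  have hRxhatdef : Rxhat = ETᵀ *ᵥ RTx + ∑ k, (E k)ᵀ *ᵥ Rx k := rfl
  have hGhatdef : Ghat = Matrix.of fun r j =>
      Sum.elim (fun rT => (GT * ET) rT j) (fun s => (G s.1 * E s.1) s.2 j) r := rfl
  have hRyhatdef : Ryhat = Sum.elim RTy fun s => Ry s.1 s.2 := rfl
  have hxhatdef : xhat = Sum.elim xT (Sum.elim p fun s => xI s.1 p s.2) := rfl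
  have hyhatdef : yhat = Sum.elim yT fun s => yD s.1 p s.2 := rfl
  -- affine representation of the parametric distribution solutions
  have hzf := fun (k : κ) (q : ιB → ℝ) =>
    dist_affine ((H k).toBlocks₁₁) ((G k).submatrix id Sum.inl) ((H k).toBlocks₁₂)
      ((G k).submatrix id Sum.inr) (fun i => Rx k (Sum.inl i)) (Ry k) (hK k)
      (xI k) (yD k) (hsol k) q
  have haff : ∀ k, ∃ (W : Matrix (ι k ⊕ ρ k) ιB ℝ) (zc : ι k ⊕ ρ k → ℝ),
      (∀ q, xI k q = fun i => (zc - W *ᵥ q) (Sum.inl i)) ∧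
        (∀ q, yD k q = fun j => (zc - W *ᵥ q) (Sum.inr j)) := by
    intro k
    refine ⟨(Matrix.fromBlocks (H k).toBlocks₁₁ ((G k).submatrix id Sum.inl)ᵀ
        ((G k).submatrix id Sum.inl) (0 : Matrix (ρ k) (ρ k) ℝ))⁻¹ *
          Matrix.of (fun (s : ι k ⊕ ρ k) (j : ιB) =>
            Sum.elim (fun i => (H k).toBlocks₁₂ i j)
              (fun i => (G k).submatrix id Sum.inr i j) s),
      (Matrix.fromBlocks (H k).toBlocks₁₁ ((G k).submatrix id Sum.inl)ᵀ
        ((G k).submatrix id Sum.inl) (0 : Matrix (ρ k) (ρ k) ℝ))⁻¹ *ᵥ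
          Sum.elim (fun i => Rx k (Sum.inl i)) (Ry k),
      fun q => ?_, fun q => ?_⟩
    · funext i; exact congrFun (hzf k q) (Sum.inl i)
    · funext j; exact congrFun (hzf k q) (Sum.inr j)
  choose W zc hxIf hyDf using haff
  have hφd := fun k => phi_hasFDerivAt (W k) (zc k) (xI k) (yD k) (hxIf k) (hyDf k) p
  -- envelope facts
  have hgrad := fun k => dist_grad (H k) (G k) (Rx k) (Ry k) (xI k p) (yD k p) p
    (hsol k p).1 (hsol k p).2
  have hkill1 : ∀ k, ((fun i => (H k *ᵥ Sum.elim (xI k p) p - Rx k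
      + (G k)ᵀ *ᵥ yD k p) (Sum.inl i)) : ι k → ℝ) = 0 :=
    fun k => funext fun i => (hgrad k).1 i
  have hkill2 : ∀ k, G k *ᵥ Sum.elim (xI k p) p - Ry k = 0 := fun k => (hgrad k).2
  -- rewrite the objective as a composition of quadratics with affine maps
  have hFeq : (fun z : (ιT → ℝ) × (ιB → ℝ) × (ρT → ℝ) =>
      ΦT (Sum.elim z.1 z.2.1) z.2.2 + ∑ k, Φt k z.2.1)
      = fun z : (ιT → ℝ) × (ιB → ℝ) × (ρT → ℝ) =>
        ((fun w : (ιT ⊕ ιB → ℝ) × (ρT → ℝ) =>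
          (1 / 2 : ℝ) * (w.1 ⬝ᵥ (HT *ᵥ w.1)) - RTx ⬝ᵥ w.1 + w.2 ⬝ᵥ (GT *ᵥ w.1 - RTy))
          ∘ (fun z : (ιT → ℝ) × (ιB → ℝ) × (ρT → ℝ) => (Sum.elim z.1 z.2.1, z.2.2))) z
        + ∑ k, ((fun w : (ι k ⊕ ιB → ℝ) × (ρ k → ℝ) =>
            (1 / 2 : ℝ) * (w.1 ⬝ᵥ (H k *ᵥ w.1)) - Rx k ⬝ᵥ w.1 + w.2 ⬝ᵥ (G k *ᵥ w.1 - Ry k))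
            ∘ ((fun q : ιB → ℝ => (Sum.elim (xI k q) q, yD k q))
              ∘ (fun z : (ιT → ℝ) × (ιB → ℝ) × (ρT → ℝ) => z.2.1))) z := by
    funext z
    simp only [Function.comp_apply]
    rw [hΦT]
    congr 1
    exact Finset.sum_congr rfl fun k _ => by rw [hΦt, hΦ]
  rw [hFeq] at hstat
  -- the derivative of the decentralized objective
  have hF := HasFDerivAt.fun_add
    (HasFDerivAt.comp (𝕜 := ℝ) (xT, p, yT)
      (quad_hasFDerivAt HT hHT GT RTx RTy (Sum.elim xT p) yT)
      (ContinuousLinearMap.hasFDerivAt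
        ((elimCLM.comp ((ContinuousLinearMap.fst ℝ (ιT → ℝ) ((ιB → ℝ) × (ρT → ℝ))).prod
            ((ContinuousLinearMap.fst ℝ (ιB → ℝ) (ρT → ℝ)).comp
              (ContinuousLinearMap.snd ℝ (ιT → ℝ) ((ιB → ℝ) × (ρT → ℝ)))))).prod
          ((ContinuousLinearMap.snd ℝ (ιB → ℝ) (ρT → ℝ)).comp
            (ContinuousLinearMap.snd ℝ (ιT → ℝ) ((ιB → ℝ) × (ρT → ℝ)))))))
    (HasFDerivAt.fun_sum (u := Finset.univ) (fun k _ =>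
      HasFDerivAt.comp (xT, p, yT)
        (HasFDerivAt.comp p
          (quad_hasFDerivAt (H k) (hH k) (G k) (Rx k) (Ry k) (Sum.elim (xI k p) p) (yD k p))
          (hφd k))
        (ContinuousLinearMap.hasFDerivAt
          ((ContinuousLinearMap.fst ℝ (ιB → ℝ) (ρT → ℝ)).comp
            (ContinuousLinearMap.snd ℝ (ιT → ℝ) ((ιB → ℝ) × (ρT → ℝ)))))))
  have h0 : HasFDerivAt (fun z : (ιT → ℝ) × (ιB → ℝ) × (ρT → ℝ) =>
      ((fun w : (ιT ⊕ ιB → ℝ) × (ρT → ℝ) =>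
        (1 / 2 : ℝ) * (w.1 ⬝ᵥ (HT *ᵥ w.1)) - RTx ⬝ᵥ w.1 + w.2 ⬝ᵥ (GT *ᵥ w.1 - RTy))
        ∘ (fun z : (ιT → ℝ) × (ιB → ℝ) × (ρT → ℝ) => (Sum.elim z.1 z.2.1, z.2.2))) z
      + ∑ k, ((fun w : (ι k ⊕ ιB → ℝ) × (ρ k → ℝ) =>
          (1 / 2 : ℝ) * (w.1 ⬝ᵥ (H k *ᵥ w.1)) - Rx k ⬝ᵥ w.1 + w.2 ⬝ᵥ (G k *ᵥ w.1 - Ry k))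
          ∘ ((fun q : ιB → ℝ => (Sum.elim (xI k q) q, yD k q))
            ∘ (fun z : (ιT → ℝ) × (ιB → ℝ) × (ρT → ℝ) => z.2.1))) z)
      (0 : ((ιT → ℝ) × (ιB → ℝ) × (ρT → ℝ)) →L[ℝ] ℝ) (xT, p, yT) := by
    have hdiff : DifferentiableAt ℝ (fun z : (ιT → ℝ) × (ιB → ℝ) × (ρT → ℝ) =>
        ((fun w : (ιT ⊕ ιB → ℝ) × (ρT → ℝ) =>
          (1 / 2 : ℝ) * (w.1 ⬝ᵥ (HT *ᵥ w.1)) - RTx ⬝ᵥ w.1 + w.2 ⬝ᵥ (GT *ᵥ w.1 - RTy))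
          ∘ (fun z : (ιT → ℝ) × (ιB → ℝ) × (ρT → ℝ) => (Sum.elim z.1 z.2.1, z.2.2))) z
        + ∑ k, ((fun w : (ι k ⊕ ιB → ℝ) × (ρ k → ℝ) =>
            (1 / 2 : ℝ) * (w.1 ⬝ᵥ (H k *ᵥ w.1)) - Rx k ⬝ᵥ w.1 + w.2 ⬝ᵥ (G k *ᵥ w.1 - Ry k))
            ∘ ((fun q : ιB → ℝ => (Sum.elim (xI k q) q, yD k q))
              ∘ (fun z : (ιT → ℝ) × (ιB → ℝ) × (ρT → ℝ) => z.2.1))) z) (xT, p, yT) :=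
      hF.differentiableAt
    have h := hdiff.hasFDerivAt
    rwa [hstat] at h
  have hL0 := hF.unique h0
  -- evaluate the vanishing derivative on arbitrary directions
  have heval' : ∀ (u : ιT → ℝ) (v : ιB → ℝ) (w : ρT → ℝ),
      (HT *ᵥ Sum.elim xT p - RTx + GTᵀ *ᵥ yT) ⬝ᵥ Sum.elim u v
        + (GT *ᵥ Sum.elim xT p - RTy) ⬝ᵥ w
        + ∑ k, (fun b => (H k *ᵥ Sum.elim (xI k p) p - Rx k
            + (G k)ᵀ *ᵥ yD k p) (Sum.inr b)) ⬝ᵥ v = 0 := by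
    intro u v w
    have h := ContinuousLinearMap.ext_iff.mp hL0 (u, v, w)
    simp only [ContinuousLinearMap.add_apply, ContinuousLinearMap.comp_apply,
      ContinuousLinearMap.sum_apply, ContinuousLinearMap.coe_fst', ContinuousLinearMap.coe_snd',
      ContinuousLinearMap.prod_apply, ContinuousLinearMap.neg_apply, ContinuousLinearMap.id_apply,
      ContinuousLinearMap.zero_apply, elimCLM_apply, resCLM_apply, mulVecCLM_apply,
      dotCLM_apply] at h
    have hterm : ∀ k, (H k *ᵥ Sum.elim (xI k p) p - Rx k + (G k)ᵀ *ᵥ yD k p) ⬝ᵥ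
          Sum.elim (fun i => (-(W k *ᵥ v)) (Sum.inl i)) v
        + (G k *ᵥ Sum.elim (xI k p) p - Ry k) ⬝ᵥ (fun j => (-(W k *ᵥ v)) (Sum.inr j))
        = (fun b => (H k *ᵥ Sum.elim (xI k p) p - Rx k
            + (G k)ᵀ *ᵥ yD k p) (Sum.inr b)) ⬝ᵥ v := by
      intro k
      rw [dotProduct_elim, hkill1 k, zero_dotProduct, zero_add, hkill2 k,
        zero_dotProduct, add_zero]
    rw [Finset.sum_congr rfl fun k _ => hterm k] at h
    exact h
  -- the three stationarity identities
  have stat1 : ∀ i0, (HT *ᵥ Sum.elim xT p - RTx + GTᵀ *ᵥ yT) (Sum.inl i0) = 0 := by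
    intro i0
    have h := heval' (Pi.single i0 1) 0 0
    rw [dotProduct_elim] at h
    simpa [dotProduct_single] using h
  have stat2 : ∀ b0, (HT *ᵥ Sum.elim xT p - RTx + GTᵀ *ᵥ yT) (Sum.inr b0)
      + ∑ k, (H k *ᵥ Sum.elim (xI k p) p - Rx k + (G k)ᵀ *ᵥ yD k p) (Sum.inr b0) = 0 := by
    intro b0
    have h := heval' 0 (Pi.single b0 1) 0
    rw [dotProduct_elim] at h
    simpa [dotProduct_single] using h
  have stat3 : GT *ᵥ Sum.elim xT p - RTy = 0 := by
    funext r0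
    have h := heval' 0 0 (Pi.single r0 1)
    rw [dotProduct_elim] at h
    simpa [dotProduct_single] using h
  -- selection matrix action on the assembled vector
  have hETx : ET *ᵥ xhat = Sum.elim xT p := by
    rw [hETdef, sel_mulVec]
    funext c
    rcases c with i | b <;> rfl
  have hEx : ∀ k, E k *ᵥ xhat = Sum.elim (xI k p) p := by
    intro k
    rw [hEdef k, sel_mulVec]
    funext c
    rcases c with i | b <;> rfl
  constructor
  · -- first centralized equation
    have hHx : Hhat *ᵥ xhat
        = ETᵀ *ᵥ (HT *ᵥ Sum.elim xT p) + ∑ k, (E k)ᵀ *ᵥ (H k *ᵥ Sum.elim (xI k p) p) := by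
      rw [hHhatdef, Matrix.add_mulVec, sum_mulVec']
      congr 1
      · rw [← Matrix.mulVec_mulVec, ← Matrix.mulVec_mulVec, hETx]
      · exact Finset.sum_congr rfl fun k _ => by
          rw [← Matrix.mulVec_mulVec, ← Matrix.mulVec_mulVec, hEx k]
    have hGy : Ghatᵀ *ᵥ yhat
        = ETᵀ *ᵥ (GTᵀ *ᵥ yT) + ∑ k, (E k)ᵀ *ᵥ ((G k)ᵀ *ᵥ yD k p) := by
      funext j
      have h1 : (ETᵀ *ᵥ (GTᵀ *ᵥ yT)) j = ∑ r, (GT * ET) r j * yT r := by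
        rw [Matrix.mulVec_mulVec, ← Matrix.transpose_mul, transpose_mulVec_apply]
      have h2 : ∀ k, ((E k)ᵀ *ᵥ ((G k)ᵀ *ᵥ yD k p)) j
          = ∑ r, (G k * E k) r j * yD k p r := by
        intro k
        rw [Matrix.mulVec_mulVec, ← Matrix.transpose_mul, transpose_mulVec_apply]
      rw [Pi.add_apply, h1, Finset.sum_apply, Finset.sum_congr rfl fun k _ => h2 k]
      rw [hGhatdef, hyhatdef, transpose_mulVec_apply]
      rw [Fintype.sum_sum_type]
      congr 1
      rw [← Finset.univ_sigma_univ, Finset.sum_sigma]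
      simp
    have hkey : ETᵀ *ᵥ (HT *ᵥ Sum.elim xT p - RTx + GTᵀ *ᵥ yT)
        + ∑ k, (E k)ᵀ *ᵥ (H k *ᵥ Sum.elim (xI k p) p - Rx k + (G k)ᵀ *ᵥ yD k p) = 0 := by
      funext j
      rw [Pi.add_apply, Finset.sum_apply, Pi.zero_apply]
      rcases j with i | j
      · have hET : (ETᵀ *ᵥ (HT *ᵥ Sum.elim xT p - RTx + GTᵀ *ᵥ yT)) (Sum.inl i)
            = (HT *ᵥ Sum.elim xT p - RTx + GTᵀ *ᵥ yT) (Sum.inl i) := by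
          rw [hETdef, selT_apply]
          simp [Fintype.sum_sum_type, Finset.sum_ite_eq]
        have hEk : ∀ k, ((E k)ᵀ *ᵥ (H k *ᵥ Sum.elim (xI k p) p - Rx k
            + (G k)ᵀ *ᵥ yD k p)) (Sum.inl i) = 0 := by
          intro k
          rw [hEdef k, selT_apply]
          simp
        rw [hET, Finset.sum_congr rfl fun k _ => hEk k]
        simp [stat1 i]
      rcases j with b | s
      · have hET : (ETᵀ *ᵥ (HT *ᵥ Sum.elim xT p - RTx + GTᵀ *ᵥ yT)) (Sum.inr (Sum.inl b))
            = (HT *ᵥ Sum.elim xT p - RTx + GTᵀ *ᵥ yT) (Sum.inr b) := by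
          rw [hETdef, selT_apply]
          simp [Fintype.sum_sum_type, Finset.sum_ite_eq]
        have hEk : ∀ k, ((E k)ᵀ *ᵥ (H k *ᵥ Sum.elim (xI k p) p - Rx k
            + (G k)ᵀ *ᵥ yD k p)) (Sum.inr (Sum.inl b))
            = (H k *ᵥ Sum.elim (xI k p) p - Rx k + (G k)ᵀ *ᵥ yD k p) (Sum.inr b) := by
          intro k
          rw [hEdef k, selT_apply]
          simp [Fintype.sum_sum_type, Finset.sum_ite_eq]
        rw [hET, Finset.sum_congr rfl fun k _ => hEk k]
        exact stat2 b
      · rcases s with ⟨k0, i0⟩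
        have hET : (ETᵀ *ᵥ (HT *ᵥ Sum.elim xT p - RTx + GTᵀ *ᵥ yT))
            (Sum.inr (Sum.inr ⟨k0, i0⟩)) = 0 := by
          rw [hETdef, selT_apply]; simp
        have hsum : ∑ k, ((E k)ᵀ *ᵥ (H k *ᵥ Sum.elim (xI k p) p - Rx k
            + (G k)ᵀ *ᵥ yD k p)) (Sum.inr (Sum.inr ⟨k0, i0⟩))
            = (H k0 *ᵥ Sum.elim (xI k0 p) p - Rx k0
              + (G k0)ᵀ *ᵥ yD k0 p) (Sum.inl i0) := by
          rw [Finset.sum_eq_single k0]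
          · rw [hEdef k0, selT_apply]
            simp [Fintype.sum_sum_type, Finset.sum_ite_eq]
          · intro k _ hne
            rw [hEdef k, selT_apply]
            simp [Fintype.sum_sum_type, Ne.symm hne]
          · intro h
            exact absurd (Finset.mem_univ k0) h
        rw [hET, hsum, zero_add]
        exact (hgrad k0).1 i0
    rw [hHx, hGy, hRxhatdef]
    have hexp := hkey
    simp only [Matrix.mulVec_add, Matrix.mulVec_sub, Finset.sum_add_distrib,
      Finset.sum_sub_distrib] at hexp
    funext j
    have h := congrFun hexp j
    simp only [Pi.add_apply, Pi.sub_apply, Pi.zero_apply, Finset.sum_apply] at h ⊢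
    linarith [h]
  · -- second centralized equation
    funext r
    rcases r with rT | s
    · have e1 : (Ghat *ᵥ xhat) (Sum.inl rT) = ((GT * ET) *ᵥ xhat) rT := rfl
      have e2 : ((GT * ET) *ᵥ xhat) rT = (GT *ᵥ (ET *ᵥ xhat)) rT := by
        rw [Matrix.mulVec_mulVec]
      rw [e1, e2, hETx, hRyhatdef]
      have h := congrFun stat3 rT
      simp only [Pi.sub_apply, Pi.zero_apply] at h
      simp only [Sum.elim_inl]
      linarith [h]
    · rcases s with ⟨k0, r0⟩
      have e1 : (Ghat *ᵥ xhat) (Sum.inr ⟨k0, r0⟩) = ((G k0 * E k0) *ᵥ xhat) r0 := rfl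
      have e2 : ((G k0 * E k0) *ᵥ xhat) r0 = (G k0 *ᵥ (E k0 *ᵥ xhat)) r0 := by
        rw [Matrix.mulVec_mulVec]
      rw [e1, e2, hEx k0, hRyhatdef]
      have h := congrFun (hkill2 k0) r0
      simp only [Pi.sub_apply, Pi.zero_apply] at h
      simp only [Sum.elim_inr]
      linarith [h]
end

section
/- Let F : ((Fin n → ℝ) × ℝ) → (Fin n → ℝ) be continuously differentiable, let α ∈ ℝ, and let λ : ℝ → (Fin n → ℝ) be differentiable. For each t, let A t denote the partial Fréchet derivative of F in its first argument at (λ t, t) and ∂ₜF(λ t, t) the partial derivative of F in its second argument at (λ t, t). Assume that for every t the map A t is a continuous linear equivalence and that λ satisfies the prediction–correction dynamics deriv λ t = −(A t)⁻¹ (α • F(λ t, t) + ∂ₜF(λ t, t)). Then the residual decays exponentially: F(λ t, t) = Real.exp(−α t) • F(λ 0, 0) for all t ∈ ℝ; in particular, if α > 0 then the KKT residual F(λ t, t) tends to 0 as t → ∞. (This is the tracking property underlying the paper's dynamic system (11): the correction term drives λ(t) toward the optimum while the prediction term compensates for the time variation.) -/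
/-!
Along the trajectory the residual `r t = F (λ t, t)` has derivative
`∂ₓF · λ̇ + ∂ₜF`; the dynamics make the first term equal to `-(α • r + ∂ₜF)`, so `r' = -α • r`.
Then `exp (α t) • r t` has zero derivative, which gives the exponential decay.
-/

open Filter Topology

section

variable {E G : Type*} [NormedAddCommGroup E] [NormedSpace ℝ E]
  [NormedAddCommGroup G] [NormedSpace ℝ G]

theorem eq_exp_mul_smul_of_hasDerivAt_smul {g : ℝ → G} {c : ℝ}
    (hg : ∀ t, HasDerivAt g (c • g t) t) (t : ℝ) : g t = Real.exp (c * t) • g 0 := by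
  have hexp : ∀ s, HasDerivAt (fun s => Real.exp (-c * s)) (-c * Real.exp (-c * s)) s := by
    intro s
    simpa [mul_comm] using ((hasDerivAt_id s).const_mul (-c)).exp
  have hzero : ∀ s, HasDerivAt (fun s => Real.exp (-c * s) • g s) 0 s := by
    intro s
    refine ((hexp s).smul (hg s)).congr_deriv ?_
    rw [smul_smul, ← add_smul, ← zero_smul ℝ (g s)]
    congr 1
    ring
  have hconst : Real.exp (-c * t) • g t = Real.exp (-c * 0) • g 0 :=
    is_const_of_deriv_eq_zero (fun s => (hzero s).differentiableAt) (fun s => (hzero s).deriv) t 0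
  calc g t = Real.exp (c * t) • Real.exp (-c * t) • g t := by
        rw [smul_smul, ← Real.exp_add, neg_mul, add_neg_cancel, Real.exp_zero, one_smul]
    _ = Real.exp (c * t) • g 0 := by rw [hconst, mul_zero, Real.exp_zero, one_smul]

theorem tendsto_exp_neg_mul_smul_atTop {α : ℝ} (hα : 0 < α) (v : G) :
    Tendsto (fun t : ℝ => Real.exp (-α * t) • v) atTop (𝓝 0) := by
  have hexp : Tendsto (fun t : ℝ => Real.exp (-α * t)) atTop (𝓝 0) :=
    Real.tendsto_exp_atBot.comp (tendsto_id.const_mul_atTop_of_neg (neg_lt_zero.mpr hα))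
  simpa using hexp.smul_const v

theorem HasFDerivAt.hasDerivAt_comp_prodMk_self {F : E × ℝ → G} {F' : E × ℝ →L[ℝ] G}
    {lam : ℝ → E} {lam' : E} {t : ℝ} (hF : HasFDerivAt F F' (lam t, t))
    (hlam : HasDerivAt lam lam' t) :
    HasDerivAt (fun s => F (lam s, s)) (F' (lam', 0) + F' (0, 1)) t := by
  have hcurve : HasDerivAt (fun s => (lam s, s)) (lam', 1) t := hlam.prodMk (hasDerivAt_id t)
  rw [← map_add, Prod.mk_add_mk, add_zero, zero_add]
  exact hF.comp_hasDerivAt_of_eq t hcurve rfl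

theorem hasDerivAt_residual_of_prediction_correction {F : E × ℝ → G} {α : ℝ}
    {lam : ℝ → E} {t : ℝ} {A : E ≃L[ℝ] G} (hF : DifferentiableAt ℝ F (lam t, t))
    (hlam : DifferentiableAt ℝ lam t) (hA : ∀ v, A v = fderiv ℝ F (lam t, t) (v, 0))
    (hdyn : deriv lam t = -A.symm (α • F (lam t, t) + fderiv ℝ F (lam t, t) (0, 1))) :
    HasDerivAt (fun s => F (lam s, s)) (-α • F (lam t, t)) t := by
  have hcorrection : fderiv ℝ F (lam t, t) (deriv lam t, 0)
      = -(α • F (lam t, t) + fderiv ℝ F (lam t, t) (0, 1)) := by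
    rw [← hA, hdyn, map_neg, A.apply_symm_apply]
  convert hF.hasFDerivAt.hasDerivAt_comp_prodMk_self hlam.hasDerivAt using 1
  rw [hcorrection]
  module

end

/-- The tracking property of the paper's prediction–correction dynamic system (11):
if `λ` satisfies `λ̇(t) = −(A t)⁻¹ (α • F(λ(t), t) + ∂ₜF(λ(t), t))`, where `A t` is the
(invertible) partial Fréchet derivative of `F` in its first argument at `(λ(t), t)`,
then the KKT residual decays exponentially, `F(λ(t), t) = exp(−α t) • F(λ(0), 0)`;
in particular for `α > 0` the residual tends to `0` as `t → ∞`. -/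
theorem prediction_correction_exponential_tracking {n : ℕ}
    (F : ((Fin n → ℝ) × ℝ) → (Fin n → ℝ)) (hF : ContDiff ℝ 1 F) (α : ℝ)
    (lam : ℝ → (Fin n → ℝ)) (hlam : Differentiable ℝ lam)
    (A : ℝ → ((Fin n → ℝ) ≃L[ℝ] (Fin n → ℝ)))
    (hA : ∀ (t : ℝ) (v : Fin n → ℝ), A t v = fderiv ℝ F (lam t, t) (v, 0))
    (hdyn : ∀ t : ℝ, deriv lam t =
      -((A t).symm (α • F (lam t, t) + fderiv ℝ F (lam t, t) (0, 1)))) :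
    (∀ t : ℝ, F (lam t, t) = Real.exp (-α * t) • F (lam 0, 0)) ∧
    (0 < α → Filter.Tendsto (fun t : ℝ => F (lam t, t)) Filter.atTop (nhds 0)) := by
  have hresidual : ∀ t, HasDerivAt (fun s => F (lam s, s)) (-α • F (lam t, t)) t := fun t =>
    hasDerivAt_residual_of_prediction_correction (hF.differentiable one_ne_zero _) (hlam t)
      (hA t) (hdyn t)
  have hdecay := eq_exp_mul_smul_of_hasDerivAt_smul hresidual
  refine ⟨hdecay, fun hα => ?_⟩
  exact (tendsto_exp_neg_mul_smul_atTop hα _).congr fun t => (hdecay t).symm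
end
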